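/- Let L ⊆ E* be prefix-closed and K ⊆ L controllable with respect to L and E_u. Let E_k ⊆ E and P_k : E* → E_k*. If P_k is an L-observer and locally control consistent (LCC) with respect to L, then P_k(K) is controllable with respect to P_k(L) and E_k ∩ E_u. That is: for every s ∈ \overline{P_k(K)} and a ∈ E_k ∩ E_u with sa ∈ P_k(L), it holds that sa ∈ \overline{P_k(K)}. -/

import Mathlib

open scoped Classical

/-- Natural projection: erase letters not in `A`. -/
noncomputable def proj {Ev : Type*} (A : Set Ev) (w : List Ev) : List Ev :=
  w.filter (fun a => decide (a ∈ A))

/-- Projection of a language. -/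
noncomputable def projL {Ev : Type*} (A : Set Ev) (L : Set (List Ev)) : Set (List Ev) :=
  proj A '' L

/-- Words over an alphabet `A`, i.e., `A*`. -/
def star {Ev : Type*} (A : Set Ev) : Set (List Ev) := {w | ∀ a ∈ w, a ∈ A}

/-- Synchronous product of `L₁ ⊆ A*` and `L₂ ⊆ B*`. -/
noncomputable def sync {Ev : Type*} (A B : Set Ev) (L1 L2 : Set (List Ev)) :
    Set (List Ev) :=
  {w | w ∈ star (A ∪ B) ∧ proj A w ∈ L1 ∧ proj B w ∈ L2}

/-- Prefix closure of a language. -/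
def prefixCl {Ev : Type*} (L : Set (List Ev)) : Set (List Ev) := {w | ∃ v, w ++ v ∈ L}

/-- Controllability of `K` with respect to (prefix-closed) `L` and uncontrollable events `Eu`. -/
def controllable {Ev : Type*} (K L : Set (List Ev)) (Eu : Set Ev) : Prop :=
  ∀ s ∈ prefixCl K, ∀ u ∈ Eu, s ++ [u] ∈ L → s ++ [u] ∈ prefixCl K

/-- Supremal controllable sublanguage of `K` w.r.t. `N` and `U`. -/
noncomputable def supC {Ev : Type*} (K N : Set (List Ev)) (U : Set Ev) : Set (List Ev) :=
  ⋃₀ {M | M ⊆ K ∧ controllable M N U}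

/-- `proj A` is an `L`-observer. -/
def observer {Ev : Type*} (A : Set Ev) (L : Set (List Ev)) : Prop :=
  ∀ t ∈ projL A L, ∀ s ∈ prefixCl L, proj A s <+: t →
    ∃ u, s ++ u ∈ L ∧ proj A (s ++ u) = t

/-- `proj A` is locally control consistent (LCC) for `L` (w.r.t. uncontrollable events `Eu`). -/
def lcc {Ev : Type*} (A Eu : Set Ev) (L : Set (List Ev)) : Prop :=
  ∀ s ∈ L, ∀ σ ∈ A ∩ Eu, proj A s ++ [σ] ∈ projL A L →
    (∃ u, (∀ a ∈ u, a ∉ A) ∧ s ++ u ++ [σ] ∈ L) →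
    ∃ u, (∀ a ∈ u, a ∈ Eu ∧ a ∉ A) ∧ s ++ u ++ [σ] ∈ L

/-!
Take `s = P_k(k)` with `k ∈ \overline{K}` and an uncontrollable `σ ∈ E_k` with `sσ ∈ P_k(L)`.
The observer property extends `k` within `L` by an `E_k`-silent word to one ending in `σ`, so
local control consistency provides such an extension `kuσ ∈ L` with `u` uncontrollable.
Controllability of `K` then keeps `kuσ` in `\overline{K}`, and `P_k(kuσ) = sσ`.
-/

section Languages

variable {Ev : Type*} {A : Set Ev}

theorem proj_append (x y : List Ev) : proj A (x ++ y) = proj A x ++ proj A y :=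
  List.filter_append x y

theorem proj_eq_nil_iff {u : List Ev} : proj A u = [] ↔ ∀ a ∈ u, a ∉ A := by
  simp [proj, List.filter_eq_nil_iff]

theorem proj_singleton_of_mem {σ : Ev} (hσ : σ ∈ A) : proj A [σ] = [σ] := by
  simp [proj, hσ]

theorem prefixCl_mono {K L : Set (List Ev)} (h : K ⊆ L) : prefixCl K ⊆ prefixCl L :=
  fun _ ⟨v, hv⟩ => ⟨v, h hv⟩

theorem mem_of_append_mem {L : Set (List Ev)} (hLc : prefixCl L = L) {s u : List Ev}
    (h : s ++ u ∈ L) : s ∈ L :=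
  hLc ▸ ⟨u, h⟩

theorem prefixCl_projL (K : Set (List Ev)) : prefixCl (projL A K) = projL A (prefixCl K) := by
  ext s
  constructor
  · rintro ⟨v, k, hk, hks⟩
    obtain ⟨k₁, k₂, rfl, hk₁, -⟩ := List.filter_eq_append_iff.mp hks
    exact ⟨k₁, ⟨k₂, hk⟩, hk₁⟩
  · rintro ⟨k, ⟨v, hv⟩, rfl⟩
    exact ⟨proj A v, k ++ v, hv, proj_append k v⟩

theorem observer.exists_silent_append_mem {L : Set (List Ev)} (hobs : observer A L)
    (hLc : prefixCl L = L) {s : List Ev} (hs : s ∈ L) {σ : Ev}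
    (hsσ : proj A s ++ [σ] ∈ projL A L) :
    ∃ u, (∀ a ∈ u, a ∉ A) ∧ s ++ u ++ [σ] ∈ L := by
  obtain ⟨w, hwL, hw⟩ := hobs _ hsσ s (hLc.symm ▸ hs) (List.prefix_append _ _)
  rw [proj_append] at hw
  obtain ⟨u₁, u₂, rfl, hu₁, -, -⟩ := List.filter_eq_cons_iff.mp (List.append_cancel_left hw)
  refine ⟨u₁, fun a ha => by simpa using hu₁ a ha, mem_of_append_mem hLc (u := u₂) ?_⟩
  simpa using hwL

theorem controllable.append_mem_prefixCl {K L : Set (List Ev)} {U : Set Ev}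
    (hK : controllable K L U) (hLc : prefixCl L = L) {s u : List Ev} (hu : ∀ a ∈ u, a ∈ U)
    (hs : s ∈ prefixCl K) (hsu : s ++ u ∈ L) : s ++ u ∈ prefixCl K := by
  induction u generalizing s with
  | nil => simpa using hs
  | cons a u ih =>
    have hsa : s ++ [a] ∈ prefixCl K :=
      hK s hs a (hu a List.mem_cons_self) (mem_of_append_mem hLc (u := u) (by simpa using hsu))
    simpa using ih (fun b hb => hu b (List.mem_cons_of_mem a hb)) hsa (by simpa using hsu)

end Languages

theorem stmt8_general {Ev : Type*} (Ek Eu : Set Ev)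
    (L K : Set (List Ev)) (hLc : prefixCl L = L) (hKL : K ⊆ L)
    (hctrl : controllable K L Eu)
    (hobs : observer Ek L) (hlcc : lcc Ek Eu L) :
    controllable (projL Ek K) (projL Ek L) (Ek ∩ Eu) := by
  intro s hs σ hσ hsσ
  rw [prefixCl_projL] at hs ⊢
  obtain ⟨k, hk, rfl⟩ := hs
  have hkL : k ∈ L := hLc ▸ prefixCl_mono hKL hk
  obtain ⟨u, hu, hkuσ⟩ := hlcc k hkL σ hσ hsσ (hobs.exists_silent_append_mem hLc hkL hsσ)
  have huσ : ∀ a ∈ u ++ [σ], a ∈ Eu := by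
    simpa [or_imp, forall_and] using ⟨fun a ha => (hu a ha).1, hσ.2⟩
  have hext : k ++ (u ++ [σ]) ∈ prefixCl K :=
    hctrl.append_mem_prefixCl hLc huσ hk (by simpa using hkuσ)
  refine ⟨_, hext, ?_⟩
  rw [proj_append, proj_append, proj_eq_nil_iff.mpr fun a ha => (hu a ha).2,
    proj_singleton_of_mem hσ.1, List.nil_append]

/-- if the projection is an L-observer and LCC for L, then controllability
is preserved under projection. -/
theorem stmt8 {Ev : Type*} (E Ek Eu : Set Ev) (hEk : Ek ⊆ E) (hEu : Eu ⊆ E)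
    (L K : Set (List Ev)) (hL : L ⊆ star E) (hLc : prefixCl L = L) (hKL : K ⊆ L)
    (hctrl : controllable K L Eu)
    (hobs : observer Ek L) (hlcc : lcc Ek Eu L) :
    controllable (projL Ek K) (projL Ek L) (Ek ∩ Eu) :=
  stmt8_general Ek Eu L K hLc hKL hctrl hobs hlcc
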